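/- Let p, q ∈ 𝒫 be two distinct predicates. There is no ShEx schema S such that for every common graph G the following holds: G is valid w.r.t. S if and only if every node v of G that has an outgoing p-edge satisfies #{u | (v,p,u) ∈ G or (v,q,u) ∈ G} = 2. (This is the property defined by the SHACL schema { ∃p.⊤ ⇒ ∃^{≥2}(p∪q).⊤ ∧ ∃^{≤2}(p∪q).⊤ } of Example 4.5; hence this SHACL schema cannot be expressed in ShEx.) -/
import Mathlib


/-! ### Common graphs -/

/-- Nodes. -/
abbrev GNode := ℕ
/-- Values. -/
abbrev GValue := ℕ
/-- Predicates. -/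
abbrev GPred := ℕ
/-- Keys. -/
abbrev GKey := ℕ

/-- Nodes or values (the disjoint union 𝒩 ∪ 𝒱). -/
abbrev NV := GNode ⊕ GValue
/-- Predicates or keys (the disjoint union 𝒫 ∪ 𝒦). -/
abbrev PK := GPred ⊕ GKey

/-- Triples of a common graph: edges (𝒩×𝒫×𝒩) and properties (𝒩×𝒦×𝒱). -/
inductive Triple : Type
  | edge (u : GNode) (p : GPred) (v : GNode)
  | prop (u : GNode) (k : GKey) (w : GValue)
  deriving DecidableEq

/-- A common graph: a finite set of triples such that for each node `u` and key `k`
there is at most one value `w` with `(u,k,w)` in the graph. -/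
structure CommonGraph : Type where
  triples : Finset Triple
  functional : ∀ u k w w', Triple.prop u k w ∈ triples → Triple.prop u k w' ∈ triples → w = w'

/-- `(v, q, u) ∈ G`, viewed as a binary relation on `𝒩 ∪ 𝒱` for each `q ∈ 𝒫 ∪ 𝒦`. -/
def tripleRel (G : CommonGraph) : PK → NV → NV → Prop
  | Sum.inl p, Sum.inl u, Sum.inl v => Triple.edge u p v ∈ G.triples
  | Sum.inr k, Sum.inl u, Sum.inr w => Triple.prop u k w ∈ G.triples
  | _, _, _ => False

/-- The nodes occurring in a common graph. -/
def nodesSet (G : CommonGraph) : Set GNode :=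
  {u | (∃ p v, Triple.edge u p v ∈ G.triples) ∨ (∃ p v, Triple.edge v p u ∈ G.triples) ∨
       (∃ k w, Triple.prop u k w ∈ G.triples)}

/-- The values occurring in a common graph. -/
def valuesSet (G : CommonGraph) : Set GValue :=
  {w | ∃ u k, Triple.prop u k w ∈ G.triples}

/-- `v ∈ Nodes(G) ∪ Values(G)`. -/
def inGraph (G : CommonGraph) : NV → Prop
  | Sum.inl u => u ∈ nodesSet G
  | Sum.inr w => w ∈ valuesSet G

/-- The content `ρ(u)` of a node: the record `{(k,w) | ρ(u,k) = w}`. -/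
def content (G : CommonGraph) (u : GNode) : Set (GKey × GValue) :=
  {kw | Triple.prop u kw.1 kw.2 ∈ G.triples}

/-! ### ShEx -/

/-- Possibly marked triples `(v, q, v')` / `(v, q⁻, v')` (with `inv = true` for marked). -/
structure STriple : Type where
  src : NV
  sym : PK
  inv : Bool
  tgt : NV
  deriving DecidableEq

/-- Well-typedness of a possibly marked triple, i.e. membership in `ℰ ∪ ℰ⁻` where
`ℰ = 𝒩×𝒫×𝒩 ∪ 𝒩×𝒦×𝒱` and `ℰ⁻ = 𝒩×𝒫⁻×𝒩 ∪ 𝒱×𝒦⁻×𝒩`. -/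
def STriple.wellTyped : STriple → Prop
  | ⟨a, Sum.inl _, false, b⟩ => (∃ u, a = Sum.inl u) ∧ (∃ v, b = Sum.inl v)
  | ⟨a, Sum.inr _, false, b⟩ => (∃ u, a = Sum.inl u) ∧ (∃ w, b = Sum.inr w)
  | ⟨a, Sum.inl _, true, b⟩ => (∃ u, a = Sum.inl u) ∧ (∃ v, b = Sum.inl v)
  | ⟨a, Sum.inr _, true, b⟩ => (∃ w, a = Sum.inr w) ∧ (∃ v, b = Sum.inl v)

/-- The signed neighbourhood `Neigh±_G(v)`. -/
def neighPM (G : CommonGraph) (v : NV) : Set STriple :=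
  {t | (t.inv = false ∧ t.src = v ∧ tripleRel G t.sym v t.tgt) ∨
       (t.inv = true ∧ t.src = v ∧ tripleRel G t.sym t.tgt v)}

mutual
/-- ShEx shapes. -/
inductive ShExShape (VT : Type) : Type
  | testC (c : GValue)
  | testT (τ : VT)
  /-- the half-open form `⟨e ; (¬R⁻)*⟩` -/
  | neighHalf (e : TExpr VT) (R : Finset PK)
  /-- the open form `⟨e ; (¬R⁻)* ; (¬Q)*⟩` -/
  | neighOpen (e : TExpr VT) (R : Finset PK) (Q : Finset PK)
  | and (φ₁ φ₂ : ShExShape VT)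
  | or (φ₁ φ₂ : ShExShape VT)
  | not (φ : ShExShape VT)

/-- ShEx closed triple expressions. -/
inductive TExpr (VT : Type) : Type
  | eps
  | fwd (q : PK) (φ : ShExShape VT)
  | bwd (q : PK) (φ : ShExShape VT)
  | seq (e₁ e₂ : TExpr VT)
  | alt (e₁ e₂ : TExpr VT)
  | star (e : TExpr VT)
end

/-- `⟦e₁ ; e₂⟧`: disjoint unions. -/
def seqSem (A B : Set (Set STriple)) : Set (Set STriple) :=
  {T | ∃ T₁ ∈ A, ∃ T₂ ∈ B, T₁ ∩ T₂ = ∅ ∧ T = T₁ ∪ T₂}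

/-- `⟦e*⟧`: finite unions of pairwise disjoint members (the empty union included). -/
def starSem (A : Set (Set STriple)) : Set (Set STriple) :=
  {T | ∃ l : List (Set STriple), (∀ X ∈ l, X ∈ A) ∧
        l.Pairwise (fun X Y => X ∩ Y = ∅) ∧ T = l.foldr (· ∪ ·) ∅}

/-- `⟦¬Q⟧` (for `b = false`) resp. `⟦¬Q⁻⟧` (for `b = true`) at focus `v`:
all singletons of (well-typed) unmarked resp. marked triples with symbol outside `Q`. -/
def negSem (v : NV) (Q : Finset PK) (b : Bool) : Set (Set STriple) :=
  {T | ∃ t : STriple, t.wellTyped ∧ t.src = v ∧ t.inv = b ∧ t.sym ∉ Q ∧ T = {t}}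

mutual
/-- Satisfaction of ShEx shapes: `G, v ⊨ φ`. -/
def shexSat {VT : Type} (semVT : VT → Set GValue) (G : CommonGraph) : NV → ShExShape VT → Prop
  | v, .testC c => v = Sum.inr c
  | v, .testT τ => ∃ w, v = Sum.inr w ∧ w ∈ semVT τ
  | v, .neighHalf e R =>
      neighPM G v ∈ seqSem (teSem semVT G v e) (starSem (negSem v R true))
  | v, .neighOpen e R Q =>
      neighPM G v ∈
        seqSem (seqSem (teSem semVT G v e) (starSem (negSem v R true))) (starSem (negSem v Q false))
  | v, .and φ₁ φ₂ => shexSat semVT G v φ₁ ∧ shexSat semVT G v φ₂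
  | v, .or φ₁ φ₂ => shexSat semVT G v φ₁ ∨ shexSat semVT G v φ₂
  | v, .not φ => ¬ shexSat semVT G v φ

/-- The semantics `⟦e⟧_v^G` of closed triple expressions. -/
def teSem {VT : Type} (semVT : VT → Set GValue) (G : CommonGraph) : NV → TExpr VT → Set (Set STriple)
  | _, .eps => {(∅ : Set STriple)}
  | v, .fwd q φ =>
      {T | ∃ t : STriple, t.wellTyped ∧ t.src = v ∧ t.sym = q ∧ t.inv = false ∧
            shexSat semVT G t.tgt φ ∧ T = {t}}
  | v, .bwd q φ =>
      {T | ∃ t : STriple, t.wellTyped ∧ t.src = v ∧ t.sym = q ∧ t.inv = true ∧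
            shexSat semVT G t.tgt φ ∧ T = {t}}
  | v, .seq e₁ e₂ => seqSem (teSem semVT G v e₁) (teSem semVT G v e₂)
  | v, .alt e₁ e₂ => teSem semVT G v e₁ ∪ teSem semVT G v e₂
  | v, .star e => starSem (teSem semVT G v e)
end

/-- The open triple expression `⊤ = ε ; (¬∅⁻)* ; (¬∅)*` as a shape. -/
def shexTop {VT : Type} : ShExShape VT := .neighOpen .eps ∅ ∅

/-- ShEx selectors: `test(c)`, `⟨q.test(c) ; ⊤⟩`, `⟨q.⟨⊤⟩ ; ⊤⟩`, `⟨q⁻.⟨⊤⟩ ; ⊤⟩`. -/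
def IsShExSelector {VT : Type} (φ : ShExShape VT) : Prop :=
  (∃ c, φ = ShExShape.testC c) ∨
  (∃ q c, φ = ShExShape.neighOpen (TExpr.fwd q (ShExShape.testC c)) ∅ ∅) ∨
  (∃ q, φ = ShExShape.neighOpen (TExpr.fwd q shexTop) ∅ ∅) ∨
  (∃ q, φ = ShExShape.neighOpen (TExpr.bwd q shexTop) ∅ ∅)

/-- A ShEx schema: a finite set of selector–shape pairs. -/
structure ShExSchema (VT : Type) : Type where
  pairs : Finset (ShExShape VT × ShExShape VT)
  sel : ∀ pr ∈ pairs, IsShExSelector pr.1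

/-- Validity of a common graph w.r.t. a ShEx schema. -/
def shexValid {VT : Type} (semVT : VT → Set GValue) (S : ShExSchema VT) (G : CommonGraph) : Prop :=
  ∀ v : NV, ∀ pr ∈ S.pairs, shexSat semVT G v pr.1 → shexSat semVT G v pr.2


lemma src_of_mem_neighPM {G : CommonGraph} {v : NV} {t : STriple} (h : t ∈ neighPM G v) :
    t.src = v := by
  rcases h with ⟨_, h, _⟩ | ⟨_, h, _⟩ <;> exact h

/-- Data of a local bijection between signed neighbourhoods. -/
def StepData (A B : CommonGraph) (R : NV → NV → Prop) (v v' : NV) (β : STriple → STriple) :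
    Prop :=
  Set.InjOn β (neighPM A v) ∧ β '' neighPM A v = neighPM B v' ∧
  ∀ t ∈ neighPM A v, (β t).src = v' ∧ (β t).sym = t.sym ∧ (β t).inv = t.inv ∧
    ((β t).wellTyped ↔ t.wellTyped) ∧ R t.tgt (β t).tgt

/-- Counting bisimulation between two common graphs. -/
def IsBisim (A B : CommonGraph) (R : NV → NV → Prop) : Prop :=
  (∀ v v', R v v' → ∀ w : GValue, (v = Sum.inr w → v' = v) ∧ (v' = Sum.inr w → v = v')) ∧
  (∀ v v', R v v' → ∃ β, StepData A B R v v' β)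

/-- `β` transports subsets of `NA` in `SA` to subsets of `NB` in `SB`, bijectively. -/
def Transfers (β : STriple → STriple) (NA NB : Set STriple) (SA SB : Set (Set STriple)) :
    Prop :=
  (∀ T, T ⊆ NA → T ∈ SA → β '' T ∈ SB) ∧
  (∀ T', T' ⊆ NB → T' ∈ SB → ∃ T, T ⊆ NA ∧ β '' T = T' ∧ T ∈ SA)

lemma image_inter_empty {β : STriple → STriple} {NA X Y : Set STriple}
    (hinj : Set.InjOn β NA) (hX : X ⊆ NA) (hY : Y ⊆ NA) (h : X ∩ Y = ∅) :
    β '' X ∩ β '' Y = ∅ := by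
  ext x
  simp only [Set.mem_inter_iff, Set.mem_empty_iff_false, iff_false, not_and]
  rintro ⟨a, ha, rfl⟩ ⟨b, hb, hba⟩
  have : b = a := hinj (hY hb) (hX ha) hba
  subst this
  have : b ∈ X ∩ Y := ⟨ha, hb⟩
  rw [h] at this
  exact this

lemma inter_empty_of_image {β : STriple → STriple} {X Y : Set STriple}
    (h : β '' X ∩ β '' Y = ∅) : X ∩ Y = ∅ := by
  ext a
  simp only [Set.mem_inter_iff, Set.mem_empty_iff_false, iff_false, not_and]
  intro ha hb
  have : β a ∈ β '' X ∩ β '' Y := ⟨⟨a, ha, rfl⟩, ⟨a, hb, rfl⟩⟩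
  rw [h] at this
  exact this

lemma Transfers.seq {β NA NB S1 S1' S2 S2'} (hinj : Set.InjOn β NA)
    (h1 : Transfers β NA NB S1 S1') (h2 : Transfers β NA NB S2 S2') :
    Transfers β NA NB (seqSem S1 S2) (seqSem S1' S2') := by
  constructor
  · rintro T hT ⟨T1, hT1, T2, hT2, hdisj, rfl⟩
    have hT1A : T1 ⊆ NA := (Set.subset_union_left).trans hT
    have hT2A : T2 ⊆ NA := (Set.subset_union_right).trans hT
    exact ⟨β '' T1, h1.1 T1 hT1A hT1, β '' T2, h2.1 T2 hT2A hT2,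
      image_inter_empty hinj hT1A hT2A hdisj, Set.image_union β T1 T2⟩
  · rintro T' hT' ⟨T1', hT1', T2', hT2', hdisj, rfl⟩
    have hT1B : T1' ⊆ NB := (Set.subset_union_left).trans hT'
    have hT2B : T2' ⊆ NB := (Set.subset_union_right).trans hT'
    obtain ⟨T1, hT1A, rfl, hT1⟩ := h1.2 T1' hT1B hT1'
    obtain ⟨T2, hT2A, rfl, hT2⟩ := h2.2 T2' hT2B hT2'
    exact ⟨T1 ∪ T2, Set.union_subset hT1A hT2A, Set.image_union β T1 T2,
      T1, hT1, T2, hT2, inter_empty_of_image hdisj, rfl⟩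

lemma foldr_union_subset {l : List (Set STriple)} {X : Set STriple} (hX : X ∈ l) :
    X ⊆ l.foldr (· ∪ ·) ∅ := by
  induction l with
  | nil => simp at hX
  | cons Y l ih =>
    rcases List.mem_cons.mp hX with rfl | hX
    · exact Set.subset_union_left
    · exact (ih hX).trans Set.subset_union_right

lemma foldr_union_subset_of {l : List (Set STriple)} {N : Set STriple}
    (h : ∀ X ∈ l, X ⊆ N) : l.foldr (· ∪ ·) ∅ ⊆ N := by
  induction l with
  | nil => simp
  | cons Y l ih =>
    exact Set.union_subset (h Y (by simp)) (ih fun X hX => h X (List.mem_cons_of_mem _ hX))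

lemma image_foldr_union (β : STriple → STriple) (l : List (Set STriple)) :
    β '' l.foldr (· ∪ ·) ∅ = (l.map (β '' ·)).foldr (· ∪ ·) ∅ := by
  induction l with
  | nil => simp
  | cons Y l ih => simp [Set.image_union, ih]

lemma Transfers.star {β NA NB S S'} (hinj : Set.InjOn β NA)
    (h : Transfers β NA NB S S') :
    Transfers β NA NB (starSem S) (starSem S') := by
  constructor
  · rintro T hT ⟨l, hmem, hpw, rfl⟩
    have hsub : ∀ X ∈ l, X ⊆ NA := fun X hX => (foldr_union_subset hX).trans hT
    refine ⟨l.map (β '' ·), ?_, ?_, image_foldr_union β l⟩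
    · rintro X hX
      rw [List.mem_map] at hX
      obtain ⟨Y, hY, rfl⟩ := hX
      exact h.1 Y (hsub Y hY) (hmem Y hY)
    · rw [List.pairwise_map]
      exact hpw.imp_of_mem fun {X Y} hX hY hXY =>
        image_inter_empty hinj (hsub X hX) (hsub Y hY) hXY
  · rintro T' hT' ⟨l', hmem, hpw, rfl⟩
    have hsub : ∀ X ∈ l', X ⊆ NB := fun X hX => (foldr_union_subset hX).trans hT'
    have pull : ∀ l' : List (Set STriple), (∀ X ∈ l', X ∈ S') → (∀ X ∈ l', X ⊆ NB) →
        ∃ l : List (Set STriple), (∀ X ∈ l, X ∈ S) ∧ (∀ X ∈ l, X ⊆ NA) ∧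
          l.map (β '' ·) = l' := by
      intro l'
      induction l' with
      | nil => exact fun _ _ => ⟨[], by simp, by simp, rfl⟩
      | cons X' l' ih =>
        intro hmem hsub
        obtain ⟨l, hl1, hl2, rfl⟩ := ih (fun X hX => hmem X (List.mem_cons_of_mem _ hX))
          (fun X hX => hsub X (List.mem_cons_of_mem _ hX))
        obtain ⟨X, hXA, rfl, hXS⟩ := h.2 X' (hsub X' (by simp)) (hmem X' (by simp))
        exact ⟨X :: l, by
          rintro Y hY
          rcases List.mem_cons.mp hY with rfl | hY
          · exact hXS
          · exact hl1 Y hY, by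
          rintro Y hY
          rcases List.mem_cons.mp hY with rfl | hY
          · exact hXA
          · exact hl2 Y hY, rfl⟩
    obtain ⟨l, hl1, hl2, rfl⟩ := pull l' hmem hsub
    refine ⟨l.foldr (· ∪ ·) ∅, foldr_union_subset_of hl2, image_foldr_union β l,
      l, hl1, ?_, rfl⟩
    rw [List.pairwise_map] at hpw
    exact hpw.imp_of_mem fun {X Y} _ _ hXY => inter_empty_of_image hXY

lemma Transfers.alt {β NA NB S1 S1' S2 S2'}
    (h1 : Transfers β NA NB S1 S1') (h2 : Transfers β NA NB S2 S2') :
    Transfers β NA NB (S1 ∪ S2) (S1' ∪ S2') := by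
  constructor
  · rintro T hT (hTS | hTS)
    · exact Or.inl (h1.1 T hT hTS)
    · exact Or.inr (h2.1 T hT hTS)
  · rintro T' hT' (hTS | hTS)
    · obtain ⟨T, h1, h2, h3⟩ := h1.2 T' hT' hTS
      exact ⟨T, h1, h2, Or.inl h3⟩
    · obtain ⟨T, h1, h2, h3⟩ := h2.2 T' hT' hTS
      exact ⟨T, h1, h2, Or.inr h3⟩

lemma Transfers.eps {β : STriple → STriple} {NA NB : Set STriple} :
    Transfers β NA NB {(∅ : Set STriple)} {(∅ : Set STriple)} := by
  constructor
  · rintro T _ rfl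
    simp
  · rintro T' _ rfl
    exact ⟨∅, by simp, by simp, rfl⟩
lemma transfers_neg {A B : CommonGraph} {R : NV → NV → Prop} {v v' : NV}
    {β : STriple → STriple} (hs : StepData A B R v v' β) (Q : Finset PK) (b : Bool) :
    Transfers β (neighPM A v) (neighPM B v') (negSem v Q b) (negSem v' Q b) := by
  constructor
  · rintro T hT ⟨t, hwt, hsrc, hinv, hsym, rfl⟩
    have htN : t ∈ neighPM A v := hT rfl
    obtain ⟨hsrc', hsym', hinv', hwt', _⟩ := hs.2.2 t htN
    exact ⟨β t, hwt'.mpr hwt, hsrc', by rw [hinv', hinv], by rw [hsym']; exact hsym,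
      Set.image_singleton⟩
  · rintro T' hT' ⟨t', hwt, hsrc, hinv, hsym, rfl⟩
    have : t' ∈ β '' neighPM A v := by rw [hs.2.1]; exact hT' rfl
    obtain ⟨t, htN, rfl⟩ := this
    obtain ⟨hsrc', hsym', hinv', hwt', _⟩ := hs.2.2 t htN
    exact ⟨{t}, by simpa using htN, Set.image_singleton,
      t, hwt'.mp hwt, src_of_mem_neighPM htN, by rw [← hinv', hinv],
      by rw [← hsym']; exact hsym, rfl⟩

mutual

theorem shape_transfer {VT : Type} (semVT : VT → Set GValue) (A B : CommonGraph)
    (R : NV → NV → Prop) (hB : IsBisim A B R) (φ : ShExShape VT) :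
    ∀ v v', R v v' → (shexSat semVT A v φ ↔ shexSat semVT B v' φ) := by
  cases φ with
  | testC c =>
    intro v v' hvv'
    have hv := hB.1 v v' hvv' c
    simp only [shexSat]
    constructor
    · intro h; rw [hv.1 h, h]
    · intro h; rw [hv.2 h, h]
  | testT τ =>
    intro v v' hvv'
    simp only [shexSat]
    constructor
    · rintro ⟨w, rfl, hw⟩
      exact ⟨w, (hB.1 _ v' hvv' w).1 rfl, hw⟩
    · rintro ⟨w, hww, hw⟩
      exact ⟨w, by rw [(hB.1 v v' hvv' w).2 hww, hww], hw⟩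
  | neighHalf e R0 =>
    intro v v' hvv'
    obtain ⟨β, hs⟩ := hB.2 v v' hvv'
    have htr := Transfers.seq hs.1
      (texpr_transfer semVT A B R hB e v v' β hs)
      (Transfers.star hs.1 (transfers_neg hs R0 true))
    simp only [shexSat]
    constructor
    · intro h
      have := htr.1 _ (subset_refl _) h
      rwa [hs.2.1] at this
    · intro h
      obtain ⟨T, hTA, hTim, hT⟩ := htr.2 _ (subset_refl _) h
      have : T = neighPM A v := by
        refine (Set.InjOn.image_eq_image_iff hs.1 hTA (subset_refl _)).mp ?_
        rw [hTim, hs.2.1]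
      rwa [this] at hT
  | neighOpen e R0 Q0 =>
    intro v v' hvv'
    obtain ⟨β, hs⟩ := hB.2 v v' hvv'
    have htr := Transfers.seq hs.1
      (Transfers.seq hs.1 (texpr_transfer semVT A B R hB e v v' β hs)
        (Transfers.star hs.1 (transfers_neg hs R0 true)))
      (Transfers.star hs.1 (transfers_neg hs Q0 false))
    simp only [shexSat]
    constructor
    · intro h
      have := htr.1 _ (subset_refl _) h
      rwa [hs.2.1] at this
    · intro h
      obtain ⟨T, hTA, hTim, hT⟩ := htr.2 _ (subset_refl _) h
      have : T = neighPM A v := by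
        refine (Set.InjOn.image_eq_image_iff hs.1 hTA (subset_refl _)).mp ?_
        rw [hTim, hs.2.1]
      rwa [this] at hT
  | and φ₁ φ₂ =>
    intro v v' hvv'
    simp only [shexSat]
    rw [shape_transfer semVT A B R hB φ₁ v v' hvv', shape_transfer semVT A B R hB φ₂ v v' hvv']
  | or φ₁ φ₂ =>
    intro v v' hvv'
    simp only [shexSat]
    rw [shape_transfer semVT A B R hB φ₁ v v' hvv', shape_transfer semVT A B R hB φ₂ v v' hvv']
  | not φ =>
    intro v v' hvv'
    simp only [shexSat]
    rw [shape_transfer semVT A B R hB φ v v' hvv']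

theorem texpr_transfer {VT : Type} (semVT : VT → Set GValue) (A B : CommonGraph)
    (R : NV → NV → Prop) (hB : IsBisim A B R) (e : TExpr VT) :
    ∀ v v' β, StepData A B R v v' β →
      Transfers β (neighPM A v) (neighPM B v') (teSem semVT A v e) (teSem semVT B v' e) := by
  cases e with
  | eps =>
    intro v v' β _
    simp only [teSem]
    exact Transfers.eps
  | fwd q φ =>
    intro v v' β hs
    constructor
    · rintro T hT ⟨t, hwt, hsrc, hsym, hinv, hφ, rfl⟩
      have htN : t ∈ neighPM A v := hT rfl
      obtain ⟨hsrc', hsym', hinv', hwt', hR⟩ := hs.2.2 t htN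
      exact ⟨β t, hwt'.mpr hwt, hsrc', by rw [hsym', hsym], by rw [hinv', hinv],
        (shape_transfer semVT A B R hB φ t.tgt (β t).tgt hR).mp hφ, Set.image_singleton⟩
    · rintro T' hT' ⟨t', hwt, hsrc, hsym, hinv, hφ, rfl⟩
      have : t' ∈ β '' neighPM A v := by rw [hs.2.1]; exact hT' rfl
      obtain ⟨t, htN, rfl⟩ := this
      obtain ⟨hsrc', hsym', hinv', hwt', hR⟩ := hs.2.2 t htN
      exact ⟨{t}, by simpa using htN, Set.image_singleton,
        t, hwt'.mp hwt, src_of_mem_neighPM htN, by rw [← hsym']; exact hsym,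
        by rw [← hinv']; exact hinv,
        (shape_transfer semVT A B R hB φ t.tgt (β t).tgt hR).mpr hφ, rfl⟩
  | bwd q φ =>
    intro v v' β hs
    constructor
    · rintro T hT ⟨t, hwt, hsrc, hsym, hinv, hφ, rfl⟩
      have htN : t ∈ neighPM A v := hT rfl
      obtain ⟨hsrc', hsym', hinv', hwt', hR⟩ := hs.2.2 t htN
      exact ⟨β t, hwt'.mpr hwt, hsrc', by rw [hsym', hsym], by rw [hinv', hinv],
        (shape_transfer semVT A B R hB φ t.tgt (β t).tgt hR).mp hφ, Set.image_singleton⟩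
    · rintro T' hT' ⟨t', hwt, hsrc, hsym, hinv, hφ, rfl⟩
      have : t' ∈ β '' neighPM A v := by rw [hs.2.1]; exact hT' rfl
      obtain ⟨t, htN, rfl⟩ := this
      obtain ⟨hsrc', hsym', hinv', hwt', hR⟩ := hs.2.2 t htN
      exact ⟨{t}, by simpa using htN, Set.image_singleton,
        t, hwt'.mp hwt, src_of_mem_neighPM htN, by rw [← hsym']; exact hsym,
        by rw [← hinv']; exact hinv,
        (shape_transfer semVT A B R hB φ t.tgt (β t).tgt hR).mpr hφ, rfl⟩
  | seq e₁ e₂ =>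
    intro v v' β hs
    simp only [teSem]
    exact Transfers.seq hs.1 (texpr_transfer semVT A B R hB e₁ v v' β hs)
      (texpr_transfer semVT A B R hB e₂ v v' β hs)
  | alt e₁ e₂ =>
    intro v v' β hs
    simp only [teSem]
    exact Transfers.alt (texpr_transfer semVT A B R hB e₁ v v' β hs)
      (texpr_transfer semVT A B R hB e₂ v v' β hs)
  | star e =>
    intro v v' β hs
    simp only [teSem]
    exact Transfers.star hs.1 (texpr_transfer semVT A B R hB e v v' β hs)

end
def GA (p q : GPred) : CommonGraph :=
  ⟨{.edge 0 p 1, .edge 0 q 1, .edge 1 p 0, .edge 1 q 0}, by intro u k w w' h; simp at h⟩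

def GB (p q : GPred) : CommonGraph :=
  ⟨{.edge 0 p 1, .edge 1 p 2, .edge 2 p 0, .edge 0 q 2, .edge 1 q 0, .edge 2 q 1},
   by intro u k w w' h; simp at h⟩

def quad (p q : GPred) (v t1 t2 t3 t4 : NV) : Set STriple :=
  {⟨v, .inl p, false, t1⟩, ⟨v, .inl q, false, t2⟩, ⟨v, .inl p, true, t3⟩, ⟨v, .inl q, true, t4⟩}

set_option maxHeartbeats 1000000 in
lemma neighGA (p q : GPred) (a : GNode) (ha : a = 0 ∨ a = 1) :
    neighPM (GA p q) (.inl a) =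
      quad p q (.inl a) (.inl (1 - a)) (.inl (1 - a)) (.inl (1 - a)) (.inl (1 - a)) := by
  ext ⟨s, sym, inv, tgt⟩
  rcases s with s | s <;> rcases sym with r | r <;> rcases inv <;> rcases tgt with u | u <;>
    simp [neighPM, quad, tripleRel, GA] <;> rcases ha with rfl | rfl <;> norm_num <;> tauto

set_option maxHeartbeats 1000000 in
lemma neighGB (p q : GPred) (a : GNode) (ha : a = 0 ∨ a = 1 ∨ a = 2) :
    neighPM (GB p q) (.inl a) =
      quad p q (.inl a) (.inl ((a + 1) % 3)) (.inl ((a + 2) % 3)) (.inl ((a + 2) % 3))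
        (.inl ((a + 1) % 3)) := by
  ext ⟨s, sym, inv, tgt⟩
  rcases s with s | s <;> rcases sym with r | r <;> rcases inv <;> rcases tgt with u | u <;>
    simp [neighPM, quad, tripleRel, GB] <;> rcases ha with rfl | rfl | rfl <;> norm_num <;> tauto
lemma neighGA_other (p q : GPred) (x : NV) (hx : ∀ a : GNode, x = .inl a → a ≠ 0 ∧ a ≠ 1) :
    neighPM (GA p q) x = ∅ := by
  ext ⟨s, sym, inv, tgt⟩
  simp only [Set.mem_empty_iff_false, iff_false]
  rcases x with a | a
  · have ha := hx a rfl
    rintro (⟨_, h2, h3⟩ | ⟨_, h2, h3⟩) <;> rcases sym with r | r <;> rcases tgt with u | u <;>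
      simp only [tripleRel, GA, Finset.mem_insert, Finset.mem_singleton,
        Triple.edge.injEq, Triple.prop.injEq] at h3 <;>
      first | exact h3 | tauto
  · rintro (⟨_, h2, h3⟩ | ⟨_, h2, h3⟩) <;> rcases sym with r | r <;> rcases tgt with u | u <;>
      first | exact h3 | simp [tripleRel, GA] at h3

lemma neighGB_other (p q : GPred) (x : NV)
    (hx : ∀ a : GNode, x = .inl a → a ≠ 0 ∧ a ≠ 1 ∧ a ≠ 2) :
    neighPM (GB p q) x = ∅ := by
  ext ⟨s, sym, inv, tgt⟩
  simp only [Set.mem_empty_iff_false, iff_false]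
  rcases x with a | a
  · have ha := hx a rfl
    rintro (⟨_, h2, h3⟩ | ⟨_, h2, h3⟩) <;> rcases sym with r | r <;> rcases tgt with u | u <;>
      simp only [tripleRel, GB, Finset.mem_insert, Finset.mem_singleton,
        Triple.edge.injEq, Triple.prop.injEq] at h3 <;>
      first | exact h3 | tauto
  · rintro (⟨_, h2, h3⟩ | ⟨_, h2, h3⟩) <;> rcases sym with r | r <;> rcases tgt with u | u <;>
      first | exact h3 | simp [tripleRel, GB] at h3
lemma stepData_quad {A B : CommonGraph} {R : NV → NV → Prop} {p q : GPred} (hpq : p ≠ q)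
    {na nb nx n1 n2 n3 n4 : ℕ}
    (hNA : neighPM A (.inl na) = quad p q (.inl na) (.inl nx) (.inl nx) (.inl nx) (.inl nx))
    (hNB : neighPM B (.inl nb) = quad p q (.inl nb) (.inl n1) (.inl n2) (.inl n3) (.inl n4))
    (h1 : R (.inl nx) (.inl n1)) (h2 : R (.inl nx) (.inl n2))
    (h3 : R (.inl nx) (.inl n3)) (h4 : R (.inl nx) (.inl n4)) :
    ∃ β, StepData A B R (.inl na) (.inl nb) β := by
  refine ⟨fun t =>
    if t.inv = false then
      (if t.sym = Sum.inl p then ⟨.inl nb, .inl p, false, .inl n1⟩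
       else ⟨.inl nb, .inl q, false, .inl n2⟩)
    else
      (if t.sym = Sum.inl p then ⟨.inl nb, .inl p, true, .inl n3⟩
       else ⟨.inl nb, .inl q, true, .inl n4⟩), ?_, ?_, ?_⟩
  · rw [hNA]
    rintro t ht t' ht' heq
    simp only [quad, Set.mem_insert_iff, Set.mem_singleton_iff] at ht ht'
    rcases ht with rfl | rfl | rfl | rfl <;> rcases ht' with rfl | rfl | rfl | rfl <;>
      simp_all [hpq, hpq.symm]
  · rw [hNA, hNB]
    simp only [quad, Set.image_insert_eq, Set.image_singleton]
    simp [hpq, hpq.symm]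
  · rw [hNA]
    rintro t ht
    simp only [quad, Set.mem_insert_iff, Set.mem_singleton_iff] at ht
    rcases ht with rfl | rfl | rfl | rfl <;>
      refine ⟨?_, ?_, ?_, ?_, ?_⟩ <;>
      simp [hpq, hpq.symm, STriple.wellTyped] <;>
      first | exact h1 | exact h2 | exact h3 | exact h4
/-- The bisimulation relation between `GA` and `GB`. -/
def Rrel (p q : GPred) : NV → NV → Prop := fun x y =>
  ((x = .inl 0 ∨ x = .inl 1) ∧ (y = .inl 0 ∨ y = .inl 1 ∨ y = .inl 2)) ∨
  (neighPM (GA p q) x = ∅ ∧ neighPM (GB p q) y = ∅ ∧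
    ((∃ a b : GNode, x = .inl a ∧ y = .inl b) ∨ x = y))

lemma Rrel_nodes (p q : GPred) (x y : GNode) (hx : x = 0 ∨ x = 1) (hy : y = 0 ∨ y = 1 ∨ y = 2) :
    Rrel p q (.inl x) (.inl y) := by
  left
  constructor
  · rcases hx with rfl | rfl
    · exact Or.inl rfl
    · exact Or.inr rfl
  · rcases hy with rfl | rfl | rfl
    · exact Or.inl rfl
    · exact Or.inr (Or.inl rfl)
    · exact Or.inr (Or.inr rfl)

lemma bisimAB (p q : GPred) (hpq : p ≠ q) : IsBisim (GA p q) (GB p q) (Rrel p q) := by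
  constructor
  · rintro v v' (⟨hv, hv'⟩ | ⟨_, _, (⟨a, b, rfl, rfl⟩ | rfl)⟩) w
    · constructor
      · rintro rfl
        rcases hv with hv | hv <;> exact absurd hv (by simp)
      · rintro rfl
        rcases hv' with hv' | hv' | hv' <;> exact absurd hv' (by simp)
    · constructor <;> (rintro h; exact absurd h (by simp))
    · exact ⟨fun h => rfl, fun h => rfl⟩
  · rintro v v' (⟨hv, hv'⟩ | ⟨hA, hB, _⟩)
    · have key : ∀ a b : GNode, (a = 0 ∨ a = 1) → (b = 0 ∨ b = 1 ∨ b = 2) →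
          ∃ β, StepData (GA p q) (GB p q) (Rrel p q) (.inl a) (.inl b) β := by
        intro a b ha hb
        have hx : 1 - a = 0 ∨ 1 - a = 1 := by rcases ha with rfl | rfl <;> norm_num
        have hy1 : (b + 1) % 3 = 0 ∨ (b + 1) % 3 = 1 ∨ (b + 1) % 3 = 2 := by
          rcases hb with rfl | rfl | rfl <;> norm_num
        have hy2 : (b + 2) % 3 = 0 ∨ (b + 2) % 3 = 1 ∨ (b + 2) % 3 = 2 := by
          rcases hb with rfl | rfl | rfl <;> norm_num
        exact stepData_quad hpq (neighGA p q a ha) (neighGB p q b hb)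
          (Rrel_nodes p q _ _ hx hy1) (Rrel_nodes p q _ _ hx hy2)
          (Rrel_nodes p q _ _ hx hy2) (Rrel_nodes p q _ _ hx hy1)
      rcases hv with rfl | rfl <;> rcases hv' with rfl | rfl | rfl <;>
        · apply key <;> norm_num
    · refine ⟨id, ?_, ?_, ?_⟩
      · rw [hA]
        exact fun a ha => absurd ha (Set.notMem_empty a)
      · rw [hA, hB]
        simp
      · rw [hA]
        rintro t ht
        exact absurd ht (Set.notMem_empty t)

lemma partner (p q : GPred) (v : NV) : ∃ v', Rrel p q v v' := by
  rcases v with a | w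
  · by_cases ha : a = 0 ∨ a = 1
    · exact ⟨.inl 0, Rrel_nodes p q a 0 ha (Or.inl rfl)⟩
    · push_neg at ha
      refine ⟨.inl 3, Or.inr ⟨neighGA_other p q _ ?_, neighGB_other p q _ ?_,
        Or.inl ⟨a, 3, rfl, rfl⟩⟩⟩
      · intro b hb
        rw [Sum.inl.injEq] at hb
        subst hb
        exact ha
      · intro b hb
        rw [Sum.inl.injEq] at hb
        subst hb
        norm_num
  · refine ⟨.inr w, Or.inr ⟨neighGA_other p q _ ?_, neighGB_other p q _ ?_, Or.inr rfl⟩⟩ <;>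
      · intro b hb
        exact absurd hb (by simp)
lemma GB_counts (p q : GPred) (hpq : p ≠ q) :
    ∀ v : GNode, (∃ u, Triple.edge v p u ∈ (GB p q).triples) →
      {u : GNode | Triple.edge v p u ∈ (GB p q).triples ∨
        Triple.edge v q u ∈ (GB p q).triples}.encard = 2 := by
  intro v ⟨u, hu⟩
  have hv : v = 0 ∨ v = 1 ∨ v = 2 := by
    simp only [GB, Finset.mem_insert, Finset.mem_singleton, Triple.edge.injEq] at hu
    tauto
  rcases hv with rfl | rfl | rfl
  · rw [show {u : GNode | Triple.edge 0 p u ∈ (GB p q).triples ∨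
        Triple.edge 0 q u ∈ (GB p q).triples} = {1, 2} by
      ext u; simp [GB, hpq, hpq.symm]]
    exact Set.encard_pair (by norm_num)
  · rw [show {u : GNode | Triple.edge 1 p u ∈ (GB p q).triples ∨
        Triple.edge 1 q u ∈ (GB p q).triples} = {2, 0} by
      ext u; simp [GB, hpq, hpq.symm]]
    exact Set.encard_pair (by norm_num)
  · rw [show {u : GNode | Triple.edge 2 p u ∈ (GB p q).triples ∨
        Triple.edge 2 q u ∈ (GB p q).triples} = {0, 1} by
      ext u; simp [GB, hpq, hpq.symm]]
    exact Set.encard_pair (by norm_num)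
lemma GA_count (p q : GPred) (hpq : p ≠ q) :
    {u : GNode | Triple.edge 0 p u ∈ (GA p q).triples ∨
      Triple.edge 0 q u ∈ (GA p q).triples} = {1} := by
  ext u
  simp [GA, hpq, hpq.symm]


/-- Let `p, q` be two distinct predicates. There is no ShEx schema `S`
such that for every common graph `G`: `G ⊨ S` iff every node `v` of `G` with an outgoing
`p`-edge satisfies `#{u | (v,p,u) ∈ G or (v,q,u) ∈ G} = 2`. -/
theorem shex_cannot_express_node_counting
    (VT : Type) (semVT : VT → Set GValue) (p q : GPred) (hpq : p ≠ q) :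
    ¬ ∃ S : ShExSchema VT, ∀ G : CommonGraph,
        shexValid semVT S G ↔
          ∀ v : GNode, (∃ u, Triple.edge v p u ∈ G.triples) →
            {u : GNode | Triple.edge v p u ∈ G.triples ∨ Triple.edge v q u ∈ G.triples}.encard
              = 2 := by
  rintro ⟨S, hS⟩
  have bis := bisimAB p q hpq
  have hB : shexValid semVT S (GB p q) := (hS (GB p q)).mpr (GB_counts p q hpq)
  have hA : shexValid semVT S (GA p q) := by
    intro v pr hpr hsel
    obtain ⟨v', hRv⟩ := partner p q v
    exact (shape_transfer semVT _ _ _ bis pr.2 v v' hRv).mpr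
      (hB v' pr hpr ((shape_transfer semVT _ _ _ bis pr.1 v v' hRv).mp hsel))
  have h0 := (hS (GA p q)).mp hA 0 ⟨1, by simp [GA]⟩
  rw [GA_count p q hpq, Set.encard_singleton] at h0
  exact absurd h0 (by decide)
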